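/- For every n ≥ 1, sup over x ∈ ℝ of |φ(x) · H_n(x)| ≤ 2^{n/2} · Γ((n+1)/2), where φ is the standard Gaussian density and H_n is the Hermite polynomial of degree n defined by φ^{(n)}(x) = (−1)^n H_n(x) φ(x). -/

import Mathlib

/-- The standard Gaussian density. -/
noncomputable def gaussPDF (x : ℝ) : ℝ := Real.exp (-x ^ 2 / 2) / Real.sqrt (2 * Real.pi)

/-- The (probabilists') Hermite polynomial of degree `n`, evaluated at `x`. -/
noncomputable def hermiteVal (n : ℕ) (x : ℝ) : ℝ := Polynomial.aeval x (Polynomial.hermite n)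

/-!
The Gaussian is itself a Fourier transform: `φ = 𝓕 g` with `g t = exp (-2π² t²)`. Differentiating
under the integral, `φ⁽ⁿ⁾ = 𝓕 ((-2πi t)ⁿ g)`, so `|φ Hₙ| = |φ⁽ⁿ⁾|` is at most the `L¹` norm
`(2π)ⁿ ∫ |t|ⁿ g t dt = (2π)ⁿ (2π²)^(-(n+1)/2) Γ((n+1)/2)`, and the constant is
`2^(n/2) / (π √2) ≤ 2^(n/2)`.
-/

open MeasureTheory Real FourierTransform

theorem iteratedDeriv_gaussPDF (n : ℕ) (x : ℝ) :
    iteratedDeriv n gaussPDF x = (-1) ^ n * hermiteVal n x * gaussPDF x := by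
  have h : gaussPDF = fun y => Real.exp (-(y ^ 2 / 2)) / √(2 * π) := by
    ext y; rw [gaussPDF, neg_div]
  rw [h, iteratedDeriv_div_const, iteratedDeriv_eq_iterate,
    Polynomial.deriv_gaussian_eq_hermite_mul_gaussian, hermiteVal, mul_div_assoc]

theorem iteratedDeriv_ofReal {f : ℝ → ℝ} {n : ℕ} {x : ℝ} (hf : ContDiffAt ℝ n f x) :
    iteratedDeriv n (fun y => (f y : ℂ)) x = iteratedDeriv n f x := by
  simp only [iteratedDeriv_eq_iteratedFDeriv]
  exact congrArg (· fun _ => 1) (Complex.ofRealCLM.iteratedFDeriv_comp_left hf le_rfl)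

theorem norm_iteratedDeriv_fourier_le {E : Type*} [NormedAddCommGroup E] [NormedSpace ℂ E]
    {f : ℝ → E} {n : ℕ} (hf : ∀ k ≤ n, Integrable (fun t : ℝ => t ^ k • f t)) (x : ℝ) :
    ‖iteratedDeriv n (𝓕 f) x‖ ≤ ∫ t, (2 * π * |t|) ^ n * ‖f t‖ := by
  rw [iteratedDeriv_fourier (N := n) (fun k hk => hf k (by exact_mod_cast hk)) le_rfl]
  refine (VectorFourier.norm_fourierIntegral_le_integral_norm _ _ _ _ _).trans_eq ?_
  congr 1 with t
  simp [norm_smul, abs_of_pos pi_pos, mul_pow]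

theorem integrable_pow_smul_cexp_neg_mul_sq {b : ℝ} (hb : 0 < b) (k : ℕ) :
    Integrable (fun t : ℝ => t ^ k • Complex.exp (-b * t ^ 2)) := by
  refine (integrable_rpow_mul_exp_neg_mul_sq hb (neg_one_lt_zero.trans_le k.cast_nonneg)).norm
    |>.mono' (by fun_prop) (.of_forall fun t => ?_)
  rw [norm_smul, norm_cexp_neg_mul_sq]
  simp

theorem integral_abs_rpow_mul_exp_neg_mul_sq {b s : ℝ} (hb : 0 < b) (hs : -1 < s) :
    ∫ t : ℝ, |t| ^ s * Real.exp (-b * t ^ 2) = b ^ (-(s + 1) / 2) * Gamma ((s + 1) / 2) := by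
  have h := integral_rpow_mul_exp_neg_mul_rpow two_pos hs hb
  have h2 := integral_comp_abs (f := fun t => t ^ s * Real.exp (-b * t ^ 2))
  simp only [sq_abs, rpow_two] at h h2
  rw [h2, h]
  ring

theorem fourier_cexp_neg_two_pi_sq_mul_sq :
    𝓕 (fun t : ℝ => Complex.exp (-(2 * π ^ 2 : ℝ) * t ^ 2)) = fun x => (gaussPDF x : ℂ) := by
  have h := fourier_gaussian_pi (b := 2 * π) (by simp [pi_pos])
  have hsqrt : (2 * π : ℂ) ^ (1 / 2 : ℂ) = (√(2 * π) : ℝ) := by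
    rw [sqrt_eq_rpow, Complex.ofReal_cpow (by positivity)]
    push_cast; ring_nf
  convert h using 3 with t x
  · push_cast; ring_nf
  · rw [gaussPDF, hsqrt]
    push_cast
    field_simp

theorem two_pi_rpow_mul_rpow_le (s : ℝ) :
    (2 * π) ^ s * (2 * π ^ 2) ^ (-(s + 1) / 2) ≤ 2 ^ (s / 2) := by
  have hπ : 1 ≤ 2 * π ^ 2 := by nlinarith [pi_gt_three]
  have hsplit : (2 * π) ^ s = 2 ^ (s / 2) * (2 * π ^ 2) ^ (s / 2) := by
    rw [← mul_rpow (by norm_num) (by positivity), show 2 * (2 * π ^ 2) = (2 * π) ^ (2 : ℝ) by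
      rw [rpow_two]; ring, ← rpow_mul (by positivity)]
    ring_nf
  calc (2 * π) ^ s * (2 * π ^ 2) ^ (-(s + 1) / 2) = 2 ^ (s / 2) * (2 * π ^ 2) ^ (-1 / 2 : ℝ) := by
        rw [hsplit, mul_assoc, ← rpow_add (by positivity)]
        ring_nf
    _ ≤ 2 ^ (s / 2) :=
        mul_le_of_le_one_right (by positivity) (rpow_le_one_of_one_le_of_nonpos hπ (by norm_num))

theorem abs_gauss_mul_hermite_le_general (n : ℕ) (x : ℝ) :
    |gaussPDF x * hermiteVal n x| ≤ (2 : ℝ) ^ ((n : ℝ) / 2) * Real.Gamma (((n : ℝ) + 1) / 2) := by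
  have hb : (0 : ℝ) < 2 * π ^ 2 := by positivity
  have hsmooth : ContDiff ℝ n gaussPDF := by unfold gaussPDF; fun_prop
  calc |gaussPDF x * hermiteVal n x|
      = ‖iteratedDeriv n (𝓕 fun t : ℝ => Complex.exp (-(2 * π ^ 2 : ℝ) * t ^ 2)) x‖ := by
        rw [fourier_cexp_neg_two_pi_sq_mul_sq, iteratedDeriv_ofReal hsmooth.contDiffAt,
          Complex.norm_real, iteratedDeriv_gaussPDF, norm_eq_abs, abs_mul, abs_mul, abs_mul,
          abs_pow, abs_neg, abs_one, one_pow, one_mul, mul_comm]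
    _ ≤ ∫ t : ℝ, (2 * π * |t|) ^ n * ‖Complex.exp (-(2 * π ^ 2 : ℝ) * t ^ 2)‖ :=
        norm_iteratedDeriv_fourier_le (fun k _ => integrable_pow_smul_cexp_neg_mul_sq hb k) x
    _ = (2 * π) ^ n * ((2 * π ^ 2) ^ (-((n : ℝ) + 1) / 2) * Gamma (((n : ℝ) + 1) / 2)) := by
        simp_rw [norm_cexp_neg_mul_sq, Complex.ofReal_re, mul_pow (2 * π), mul_assoc,
          integral_const_mul, ← rpow_natCast _ n]
        rw [integral_abs_rpow_mul_exp_neg_mul_sq hb (neg_one_lt_zero.trans_le n.cast_nonneg)]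
    _ ≤ 2 ^ ((n : ℝ) / 2) * Gamma (((n : ℝ) + 1) / 2) := by
        rw [← mul_assoc, ← rpow_natCast (2 * π) n]
        exact mul_le_mul_of_nonneg_right (two_pi_rpow_mul_rpow_le n)
          (Gamma_pos_of_pos (by positivity)).le

theorem abs_gauss_mul_hermite_le (n : ℕ) (hn : 1 ≤ n) (x : ℝ) :
    |gaussPDF x * hermiteVal n x| ≤ (2 : ℝ) ^ ((n : ℝ) / 2) * Real.Gamma (((n : ℝ) + 1) / 2) :=
  abs_gauss_mul_hermite_le_general n x
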